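/- The language L = {a b^{2n} b̄^{2n} ā | n ≥ 1} is not an XML-language. Its surfaces are S_a(L) = {b} and S_b(L) = {b, ε}, and the unique XML-language with these surfaces is {a bⁿ b̄ⁿ ā | n ≥ 1}, which strictly contains well-formed factors (e.g. b b̄) occurring with contexts not closed under exchange; concretely, (ab, ab̄ā) is a context of b b̄ in L but not of b² b̄² while both b b̄ and b² b̄² lie in F_b(L), violating the context condition. -/

import Mathlib

variable {α : Type}

/-- Dyck words over `A ∪ Ā`: a letter is a pair `(a, true)` (opening tag `a`)
or `(a, false)` (closing tag `ā`). `IsDyck w` means `w` is well-balanced. -/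
inductive IsDyck : List (α × Bool) → Prop
  | nil : IsDyck []
  | cons (a : α) {u v : List (α × Bool)} : IsDyck u → IsDyck v →
      IsDyck ((a, true) :: u ++ (a, false) :: v)

/-- `IsDyckPrime a w`: `w` is a Dyck prime starting with the letter `a`,
i.e. `w = a u ā` with `u` well-balanced. Membership in `D_a`. -/
def IsDyckPrime (a : α) (w : List (α × Bool)) : Prop :=
  ∃ u, IsDyck u ∧ w = (a, true) :: u ++ [(a, false)]

/-- Membership in the set `D` of all Dyck primes. -/
def IsPrime (w : List (α × Bool)) : Prop := ∃ a, IsDyckPrime a w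

/-- `F_a(L) = D_a ∩ F(L)`: factors of words of `L` that are Dyck primes starting with `a`. -/
def Fa (L : Set (List (α × Bool))) (a : α) : Set (List (α × Bool)) :=
  {w | IsDyckPrime a w ∧ ∃ v ∈ L, w <:+: v}

/-- The surface `S_a(L)`: traces `a₁ ⋯ aₙ` of words `a u₁ ⋯ uₙ ā ∈ F_a(L)` with `uᵢ ∈ D_{aᵢ}`. -/
def Surface (L : Set (List (α × Bool))) (a : α) : Set (List α) :=
  {m | ∃ us : List (List (α × Bool)), List.Forall₂ IsDyckPrime m us ∧
      (a, true) :: us.flatten ++ [(a, false)] ∈ Fa L a}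

/-- The language generated by nonterminal `X_a` in the XML-grammar with production
bodies `R : α → Set (List α)` (a body `a₁ ⋯ aₙ ∈ R a` encodes `X_a → a X_{a₁} ⋯ X_{aₙ} ā`). -/
inductive Gen (R : α → Set (List α)) : α → List (α × Bool) → Prop
  | mk (a : α) (m : List α) (us : List (List (α × Bool))) :
      m ∈ R a → List.Forall₂ (Gen R) m us →
      Gen R a ((a, true) :: us.flatten ++ [(a, false)])

/-- The grammar `R` with axiom `X_{a₀}` is reduced: every nonterminal is accessible
from the axiom and every nonterminal is productive. -/
def Reduced (R : α → Set (List α)) (a₀ : α) : Prop :=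
  (∀ a, Relation.ReflTransGen (fun x y => ∃ m ∈ R x, y ∈ m) a₀ a) ∧
  (∀ a, ∃ w, Gen R a w)

/-- An XML-grammar: each production body set `R_a` is a regular language over the
nonterminal alphabet (identified with `A`). -/
def IsXMLGrammar (R : α → Set (List α)) : Prop :=
  ∀ a, Language.IsRegular (R a : Language α)

/-- An XML-language: a language generated by some XML-grammar. -/
def IsXMLLanguage (L : Set (List (α × Bool))) : Prop :=
  ∃ (a₀ : α) (R : α → Set (List α)), IsXMLGrammar R ∧ L = {w | Gen R a₀ w}

/-- The set of contexts of `w` in `L`: pairs `(x, y)` with `x w y ∈ L`. -/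
def Ctx (L : Set (List (α × Bool))) (w : List (α × Bool)) :
    Set (List (α × Bool) × List (α × Bool)) :=
  {p | p.1 ++ w ++ p.2 ∈ L}

/-- The language `{a b^{2n} b̄^{2n} ā | n ≥ 1}` over `A = {a, b}`
(encoded as `Fin 2` with `a = 0`, `b = 1`). -/
def Lb2 : Set (List (Fin 2 × Bool)) :=
  {w | ∃ n, 1 ≤ n ∧
    w = ((0 : Fin 2), true) ::
        (List.replicate (2 * n) ((1 : Fin 2), true) ++
         List.replicate (2 * n) ((1 : Fin 2), false)) ++
        [((0 : Fin 2), false)]}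

/-- The language `{a bⁿ b̄ⁿ ā | n ≥ 1}`, the standard (unique XML) language for
the surfaces `S_a = {b}`, `S_b = {b, ε}`. -/
def Lstd : Set (List (Fin 2 × Bool)) :=
  {w | ∃ n, 1 ≤ n ∧
    w = ((0 : Fin 2), true) ::
        (List.replicate n ((1 : Fin 2), true) ++ List.replicate n ((1 : Fin 2), false)) ++
        [((0 : Fin 2), false)]}

/-- The standard grammar of the surfaces `S_a = {b}`, `S_b = {b, ε}`. -/
def Sstd : Fin 2 → Set (List (Fin 2)) :=
  fun a => if a = 0 then {[(1 : Fin 2)]} else {[(1 : Fin 2)], []}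


section Aux
open List

private def Tc (w : List (α × Bool)) : ℕ := w.countP (fun x => x.2)
private def Fc (w : List (α × Bool)) : ℕ := w.countP (fun x => !x.2)

private lemma Tc_append (u v : List (α × Bool)) : Tc (u ++ v) = Tc u + Tc v :=
  List.countP_append
private lemma Fc_append (u v : List (α × Bool)) : Fc (u ++ v) = Fc u + Fc v :=
  List.countP_append
private lemma Tc_nil : Tc ([] : List (α × Bool)) = 0 := rfl
private lemma Fc_nil : Fc ([] : List (α × Bool)) = 0 := rfl
private lemma Tc_cons_t (c : α) (l) : Tc ((c, true) :: l) = Tc l + 1 := by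
  simp [Tc, List.countP_cons]
private lemma Tc_cons_f (c : α) (l) : Tc ((c, false) :: l) = Tc l := by
  simp [Tc, List.countP_cons]
private lemma Fc_cons_t (c : α) (l) : Fc ((c, true) :: l) = Fc l := by
  simp [Fc, List.countP_cons]
private lemma Fc_cons_f (c : α) (l) : Fc ((c, false) :: l) = Fc l + 1 := by
  simp [Fc, List.countP_cons]

private lemma dyck_append {u v : List (α × Bool)} (hu : IsDyck u) (hv : IsDyck v) :
    IsDyck (u ++ v) := by
  induction hu generalizing v with
  | nil => simpa
  | cons a h1 h2 ih1 ih2 =>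
    have := IsDyck.cons a h1 (ih2 hv)
    simpa using this

private lemma prime_dyck {a : α} {w : List (α × Bool)} (h : IsDyckPrime a w) : IsDyck w := by
  obtain ⟨u, hu, rfl⟩ := h
  exact IsDyck.cons a hu IsDyck.nil

private lemma prime_ne_nil {a : α} {w : List (α × Bool)} (h : IsDyckPrime a w) : w ≠ [] := by
  obtain ⟨u, -, rfl⟩ := h; simp

private lemma prime_head {a : α} {w : List (α × Bool)} (h : IsDyckPrime a w) :
    w.head? = some (a, true) := by
  obtain ⟨u, -, rfl⟩ := h; rfl

private lemma flatten_dyck {m : List α} {us : List (List (α × Bool))}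
    (h : List.Forall₂ IsDyckPrime m us) : IsDyck us.flatten := by
  induction h with
  | nil => exact IsDyck.nil
  | cons h1 h2 ih => exact dyck_append (prime_dyck h1) ih

private lemma dyck_balance {w : List (α × Bool)} (h : IsDyck w) : Tc w = Fc w := by
  induction h with
  | nil => rfl
  | cons a h1 h2 ih1 ih2 =>
    simp only [List.cons_append, Tc_append, Fc_append, Tc_cons_t, Tc_cons_f, Fc_cons_t,
      Fc_cons_f, Tc_nil, Fc_nil] at *
    omega

private lemma dyck_prefix_count {w p : List (α × Bool)} (h : IsDyck w) (hp : p <+: w) :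
    Fc p ≤ Tc p := by
  induction h generalizing p with
  | nil =>
    rw [List.prefix_nil.mp hp]
    simp [Tc_nil, Fc_nil]
  | cons a h1 h2 ih1 ih2 =>
    rename_i u v
    rcases p with _ | ⟨x, q⟩
    · simp [Tc_nil, Fc_nil]
    · obtain ⟨t, ht⟩ := hp
      have hx : x = (a, true) := by
        have := congrArg List.head? ht; simpa using this
      have hq : q <+: u ++ (a, false) :: v := by
        refine ⟨t, ?_⟩
        have := congrArg List.tail ht; simpa using this
      subst hx
      by_cases hlen : q.length ≤ u.length
      · have hqu : q <+: u := List.prefix_of_prefix_length_le hq (List.prefix_append u _) hlen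
        have := ih1 hqu
        simp only [Tc_cons_t, Fc_cons_t]
        omega
      · have hu : u <+: q := List.prefix_of_prefix_length_le (List.prefix_append u _) hq (by omega)
        obtain ⟨r, hr⟩ := hu
        subst hr
        have hrv : r <+: (a, false) :: v := by
          rw [← List.prefix_append_right_inj u]; exact hq
        have hbu := dyck_balance h1
        rcases r with _ | ⟨y, r'⟩
        · simp only [Tc_cons_t, Fc_cons_t, List.append_nil, Tc_append, Fc_append,
            Tc_nil, Fc_nil]
          omega
        · have hy : y = (a, false) := by
            obtain ⟨t2, ht2⟩ := hrv
            have := congrArg List.head? ht2; simpa using this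
          subst hy
          have hr'v : r' <+: v := by
            obtain ⟨t2, ht2⟩ := hrv
            exact ⟨t2, by simpa using ht2⟩
          have := ih2 hr'v
          simp only [Tc_cons_t, Fc_cons_t, Tc_append, Fc_append, Tc_cons_f, Fc_cons_f]
          omega

/-- a nonempty balanced prefix of a Dyck prime is the whole word -/
private lemma prefix_balanced_eq {a : α} {w p : List (α × Bool)} (h : IsDyckPrime a w)
    (hp : p <+: w) (hne : p ≠ []) (hbal : Tc p = Fc p) : p = w := by
  obtain ⟨u, hu, rfl⟩ := h
  rcases p with _ | ⟨x, q⟩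
  · exact absurd rfl hne
  obtain ⟨t, ht⟩ := hp
  have hx : x = (a, true) := by
    have := congrArg List.head? ht; simpa using this
  subst hx
  have hq : q <+: u ++ [(a, false)] := by
    refine ⟨t, ?_⟩
    have := congrArg List.tail ht; simpa using this
  simp only [Tc_cons_t, Fc_cons_t] at hbal
  by_cases hlen : q.length ≤ u.length
  · exfalso
    have hqu : q <+: u := List.prefix_of_prefix_length_le hq (List.prefix_append u _) hlen
    have := dyck_prefix_count hu hqu
    omega
  · have hu2 : u <+: q := List.prefix_of_prefix_length_le (List.prefix_append u _) hq (by omega)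
    obtain ⟨r, hr⟩ := hu2
    subst hr
    have hrv : r <+: [(a, false)] := by
      rw [← List.prefix_append_right_inj u]; exact hq
    have hbu := dyck_balance hu
    rcases r with _ | ⟨y, r'⟩
    · exfalso
      simp only [List.append_nil, Tc_append, Fc_append, Tc_nil, Fc_nil] at hbal
      omega
    · have : y = (a, false) ∧ r' = [] := by
        obtain ⟨t2, ht2⟩ := hrv
        cases r' with
        | nil => exact ⟨by simpa using congrArg List.head? ht2, rfl⟩
        | cons z r'' =>
          exfalso
          have := congrArg List.length ht2
          simp at this
      obtain ⟨rfl, rfl⟩ := this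
      rfl

/-- a nonempty balanced suffix of a Dyck prime is the whole word -/
private lemma suffix_balanced_eq {a : α} {w s : List (α × Bool)} (h : IsDyckPrime a w)
    (hs : s <:+ w) (hne : s ≠ []) (hbal : Tc s = Fc s) : s = w := by
  obtain ⟨x, hx⟩ := hs
  have hw := dyck_balance (prime_dyck h)
  rw [← hx, Tc_append, Fc_append] at hw
  rcases eq_or_ne x [] with rfl | hxne
  · simpa using hx
  · exfalso
    have hxw := prefix_balanced_eq h (hx ▸ List.prefix_append x s) hxne (by omega)
    have hl := congrArg List.length hx
    rw [hxw] at hl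
    simp only [List.length_append] at hl
    have hs0 : s.length = 0 := by omega
    exact hne (List.eq_nil_of_length_eq_zero hs0)

end Aux

section Aux2
open List

private lemma forall₂_mem_imp {γ δ : Type*} {P Q : γ → δ → Prop} :
    ∀ {m : List γ} {us : List δ}, List.Forall₂ P m us →
      (∀ x y, y ∈ us → P x y → Q x y) → List.Forall₂ Q m us := by
  intro m us h
  induction h with
  | nil => exact fun _ => List.Forall₂.nil
  | cons h1 h2 ih =>
    intro hpq
    exact List.Forall₂.cons (hpq _ _ (by simp) h1)
      (ih fun x y hy => hpq x y (by simp [hy]))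

private lemma forall₂_mem_right {γ δ : Type*} {P : γ → δ → Prop} :
    ∀ {m : List γ} {us : List δ}, List.Forall₂ P m us →
      ∀ y ∈ us, ∃ x ∈ m, P x y := by
  intro m us h
  induction h with
  | nil => simp
  | cons h1 h2 ih =>
    intro y hy
    rcases List.mem_cons.mp hy with rfl | hy
    · exact ⟨_, by simp, h1⟩
    · obtain ⟨x, hx, hp⟩ := ih y hy
      exact ⟨x, by simp [hx], hp⟩

private lemma flatten_len_lt {us : List (List (α × Bool))} {u : List (α × Bool)}
    (hu : u ∈ us) (a : α) :
    u.length < ((a, true) :: us.flatten ++ [(a, false)]).length := by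
  have := (List.infix_of_mem_flatten hu).length_le
  simp at this ⊢; omega

/-- custom induction principle for `Gen` (working around nested induction) -/
private lemma gen_ind {R : α → Set (List α)} {P : α → List (α × Bool) → Prop}
    (step : ∀ a m us, m ∈ R a → List.Forall₂ (Gen R) m us → List.Forall₂ P m us →
      P a ((a, true) :: us.flatten ++ [(a, false)])) :
    ∀ a w, Gen R a w → P a w := by
  have main : ∀ n a (w : List (α × Bool)), w.length ≤ n → Gen R a w → P a w := by
    intro n
    induction n with
    | zero =>
      intro a w hl h
      cases h with
      | mk a m us hm hf => simp at hl
    | succ n ih =>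
      intro a w hl h
      cases h with
      | mk a m us hm hf =>
        refine step a m us hm hf (forall₂_mem_imp hf ?_)
        intro x y hy hg
        have := flatten_len_lt hy a
        exact ih x y (by omega) hg
  exact fun a w h => main w.length a w le_rfl h

private lemma gen_prime {R : α → Set (List α)} {a : α} {w : List (α × Bool)}
    (h : Gen R a w) : IsDyckPrime a w := by
  refine gen_ind (P := fun a w => IsDyckPrime a w) ?_ a w h
  intro a m us hm hf hp
  exact ⟨us.flatten, flatten_dyck hp, by simp⟩

private lemma gen_mono {R R' : α → Set (List α)} (hRR : ∀ a, R a ⊆ R' a) {a : α}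
    {w : List (α × Bool)} (h : Gen R a w) : Gen R' a w := by
  refine gen_ind (P := fun a w => Gen R' a w) ?_ a w h
  intro a m us hm hf hp
  exact Gen.mk a m us (hRR a hm) hp

/-- every subderivation, as long as the whole word is an infix of `W`,
uses only productions realized as Dyck-prime factors of `W` -/
private lemma gen_restrict {R : α → Set (List α)} {W : List (α × Bool)} {a : α}
    {w : List (α × Bool)} (h : Gen R a w) (hw : w <:+: W) :
    Gen (fun c => {m | ∃ us, List.Forall₂ IsDyckPrime m us ∧
      ((c, true) :: us.flatten ++ [(c, false)]) <:+: W}) a w := by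
  set R' : α → Set (List α) := fun c => {m | ∃ us, List.Forall₂ IsDyckPrime m us ∧
      ((c, true) :: us.flatten ++ [(c, false)]) <:+: W} with hR'
  have main : ∀ a w, Gen R a w → (w <:+: W → Gen R' a w) := by
    refine gen_ind ?_
    intro a m us hm hf hp hinf
    refine Gen.mk a m us ?_ ?_
    · refine ⟨us, forall₂_mem_imp hf (fun x y _ hg => gen_prime hg), hinf⟩
    · refine forall₂_mem_imp hp ?_
      intro x y hy hgy
      refine hgy (List.IsInfix.trans (List.infix_of_mem_flatten hy) ?_)
      refine List.IsInfix.trans ⟨[(a, true)], [(a, false)], by simp⟩ hinf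
  exact main a w h hw

private lemma infix_append_cases {β : Type*} {p u r : List β} (h : p <:+: u ++ r) :
    p <:+: u ∨ p <:+: r ∨ ∃ s q, s <:+ u ∧ q <+: r ∧ s ≠ [] ∧ q ≠ [] ∧ p = s ++ q := by
  obtain ⟨x, y, e⟩ := h
  have hp : p = ((u ++ r).drop x.length).take p.length := by
    rw [← e, List.append_assoc, List.drop_left, List.take_left]
  rw [List.drop_append, List.take_append] at hp
  set A := (u.drop x.length).take p.length with hA
  set B := (r.drop (x.length - u.length)).take (p.length - (u.drop x.length).length) with hB
  have hBinf : B <:+: r := by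
    rw [hB]
    exact List.IsInfix.trans (List.take_prefix _ _).isInfix (List.drop_suffix _ _).isInfix
  have hAinf : A <:+: u := by
    rw [hA]
    exact List.IsInfix.trans (List.take_prefix _ _).isInfix (List.drop_suffix _ _).isInfix
  rcases eq_or_ne B [] with hBnil | hBne
  · left
    rw [hBnil, List.append_nil] at hp
    rw [hp]; exact hAinf
  rcases eq_or_ne A [] with hAnil | hAne
  · right; left
    rw [hAnil, List.nil_append] at hp
    rw [hp]; exact hBinf
  · right; right
    have hxu : x.length < u.length := by
      by_contra hcon
      push_neg at hcon
      rw [hA] at hAne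
      simp [List.drop_eq_nil_of_le hcon] at hAne
    have hAlen : (u.drop x.length).length ≤ p.length := by
      by_contra hcon
      push_neg at hcon
      have hlt : p.length - (u.drop x.length).length = 0 := by omega
      rw [hlt] at hB
      simp [hB] at hBne
    have hAfull : A = u.drop x.length := by rw [hA, List.take_of_length_le hAlen]
    refine ⟨A, B, ?_, ?_, hAne, hBne, hp⟩
    · rw [hAfull]; exact List.drop_suffix _ _
    · rw [hB]
      have : x.length - u.length = 0 := by omega
      rw [this, List.drop_zero]
      exact List.take_prefix _ _

end Aux2

section Aux3
open List

private lemma dyck_suffix_count {w s : List (α × Bool)} (h : IsDyck w) (hs : s <:+ w) :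
    Tc s ≤ Fc s := by
  obtain ⟨x, hx⟩ := hs
  have hb := dyck_balance h
  have hp := dyck_prefix_count h (hx ▸ List.prefix_append x s)
  rw [← hx, Tc_append, Fc_append] at hb
  omega

private lemma prime_infix_flatten {m : List α} {us : List (List (α × Bool))}
    {p : List (α × Bool)} {c : α} (hf : List.Forall₂ IsDyckPrime m us)
    (hp : p <:+: us.flatten) (hprime : IsDyckPrime c p) :
    ∃ u ∈ us, p <:+: u := by
  induction hf with
  | nil =>
    exfalso
    rw [List.flatten_nil, List.infix_nil] at hp
    exact prime_ne_nil hprime hp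
  | cons h1 h2 ih =>
    rename_i x u m' us'
    rw [List.flatten_cons] at hp
    rcases infix_append_cases hp with h | h | ⟨s, q, hs, hq, hsne, hqne, rfl⟩
    · exact ⟨u, by simp, h⟩
    · obtain ⟨u', hu', hpu⟩ := ih h
      exact ⟨u', by simp [hu'], hpu⟩
    · exfalso
      have h1' : Tc s ≤ Fc s := dyck_suffix_count (prime_dyck h1) hs
      have h3' : Fc s ≤ Tc s :=
        dyck_prefix_count (prime_dyck hprime) (List.prefix_append s q)
      have hsbal : Tc s = Fc s := Nat.le_antisymm h1' h3'
      have hsu : s = u := suffix_balanced_eq h1 hs hsne hsbal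
      subst hsu
      have hup : s <+: s ++ q := List.prefix_append s q
      have hsp : s = s ++ q :=
        prefix_balanced_eq hprime hup hsne hsbal
      have := congrArg List.length hsp
      simp at this
      exact hqne this

private lemma flatten_eq_prime {m : List α} {us : List (List (α × Bool))}
    {u : List (α × Bool)} {c : α} (hf : List.Forall₂ IsDyckPrime m us)
    (hfl : us.flatten = u) (hu : IsDyckPrime c u) : m = [c] := by
  cases hf with
  | nil =>
    exfalso
    rw [List.flatten_nil] at hfl
    exact prime_ne_nil hu hfl.symm
  | cons h1 h2 =>
    rename_i x u₁ m' us'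
    rw [List.flatten_cons] at hfl
    have hpre : u₁ <+: u := ⟨us'.flatten, hfl⟩
    have hbal : Tc u₁ = Fc u₁ := dyck_balance (prime_dyck h1)
    have he : u₁ = u := prefix_balanced_eq hu hpre (prime_ne_nil h1) hbal
    have hflnil : us'.flatten = [] := by
      have hl := congrArg List.length hfl
      rw [he] at hl
      simp only [List.length_append] at hl
      exact List.eq_nil_of_length_eq_zero (by omega)
    have hm' : m' = [] := by
      cases h2 with
      | nil => rfl
      | cons hh _ =>
        exfalso
        rename_i u₂ us''
        rw [List.flatten_cons] at hflnil
        exact prime_ne_nil hh (List.append_eq_nil_iff.mp hflnil).1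
    have hx : x = c := by
      have h3 := prime_head h1
      rw [he, prime_head hu] at h3
      simpa using h3.symm
    rw [hm', hx]

private lemma gen_subtree {R : α → Set (List α)} {a : α} {w : List (α × Bool)}
    (hgen : Gen R a w) {c : α} {p : List (α × Bool)} (hinf0 : p <:+: w)
    (hp0 : IsDyckPrime c p) : Gen R c p := by
  have main : ∀ n a (w : List (α × Bool)), w.length ≤ n → Gen R a w →
      ∀ c p, p <:+: w → IsDyckPrime c p → Gen R c p := by
    intro n
    induction n with
    | zero =>
      intro a w hl h
      cases h with
      | mk a m us hm hf => simp at hl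
    | succ n ih =>
      intro a w hl h c p hinf hp
      cases h with
      | mk a m us hm hf =>
        have hwgen : Gen R a ((a, true) :: us.flatten ++ [(a, false)]) := Gen.mk a m us hm hf
        have hwprime : IsDyckPrime a ((a, true) :: us.flatten ++ [(a, false)]) :=
          gen_prime hwgen
        have hpbal : Tc p = Fc p := dyck_balance (prime_dyck hp)
        obtain ⟨x, y, e⟩ := hinf
        have whole : p = (a, true) :: us.flatten ++ [(a, false)] → Gen R c p := by
          intro hpw
          have hca : c = a := by
            have h1 := prime_head hp
            rw [hpw] at h1
            simpa using h1.symm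
          rw [hca, hpw]
          exact hwgen
        rcases eq_or_ne x [] with rfl | hxne
        · exact whole (prefix_balanced_eq hwprime ⟨y, by simpa using e⟩
            (prime_ne_nil hp) hpbal)
        rcases eq_or_ne y [] with rfl | hyne
        · exact whole (suffix_balanced_eq hwprime ⟨x, by simpa using e⟩
            (prime_ne_nil hp) hpbal)
        -- proper internal infix: strip the end markers
        obtain ⟨x₀, x', rfl⟩ : ∃ x₀ x', x = x₀ :: x' := by
          cases x with
          | nil => exact absurd rfl hxne
          | cons x₀ x' => exact ⟨x₀, x', rfl⟩
        obtain ⟨y', z, rfl⟩ : ∃ y' z, y = y' ++ [z] := by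
          rcases y.eq_nil_or_concat with rfl | ⟨y', z, hy⟩
          · exact absurd rfl hyne
          · exact ⟨y', z, by simpa using hy⟩
        have hx0 : x₀ = (a, true) := by
          have := congrArg List.head? e
          simpa using this
        subst hx0
        have e' : x' ++ p ++ y' ++ [z] = us.flatten ++ [(a, false)] := by
          have := congrArg List.tail e
          simpa [List.append_assoc] using this
        have hz : z = (a, false) := by
          have := congrArg List.getLast? e'
          rw [show x' ++ p ++ y' ++ [z] = (x' ++ p ++ y') ++ [z] by simp [List.append_assoc],
            List.getLast?_concat, List.getLast?_concat] at this
          simpa using this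
        have e3 : x' ++ p ++ y' = us.flatten := by
          apply List.append_cancel_right (bs := [z])
          rw [show (x' ++ p ++ y') ++ [z] = x' ++ p ++ y' ++ [z] by simp [List.append_assoc], e', hz]
        have hfp : List.Forall₂ IsDyckPrime m us :=
          forall₂_mem_imp hf (fun _ _ _ hg => gen_prime hg)
        obtain ⟨u, hu, hpu⟩ := prime_infix_flatten hfp ⟨x', y', e3⟩ hp
        obtain ⟨xm, hxm, hgu⟩ := forall₂_mem_right hf u hu
        refine ih xm u ?_ hgu c p hpu hp
        have := flatten_len_lt hu a
        simp at hl this ⊢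
        omega
  exact main w.length a w le_rfl hgen c p hinf0 hp0

end Aux3

section Aux4
open List

private lemma Tc_rep_t (c : α) (n : ℕ) : Tc (List.replicate n (c, true)) = n := by
  induction n with
  | zero => rfl
  | succ n ih => rw [List.replicate_succ, Tc_cons_t, ih]

private lemma Tc_rep_f (c : α) (n : ℕ) : Tc (List.replicate n (c, false)) = 0 := by
  induction n with
  | zero => rfl
  | succ n ih => rw [List.replicate_succ, Tc_cons_f, ih]

private lemma Fc_rep_t (c : α) (n : ℕ) : Fc (List.replicate n (c, true)) = 0 := by
  induction n with
  | zero => rfl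
  | succ n ih => rw [List.replicate_succ, Fc_cons_t, ih]

private lemma Fc_rep_f (c : α) (n : ℕ) : Fc (List.replicate n (c, false)) = n := by
  induction n with
  | zero => rfl
  | succ n ih => rw [List.replicate_succ, Fc_cons_f, ih]

private lemma dyck_rep (c : α) : ∀ n,
    IsDyck (List.replicate n (c, true) ++ List.replicate n (c, false))
  | 0 => IsDyck.nil
  | n + 1 => by
    have := IsDyck.cons c (dyck_rep c n) IsDyck.nil
    rw [List.replicate_succ, List.replicate_succ' (n := n)]
    simpa using this

private lemma prime_rep (c : α) {k : ℕ} (hk : 1 ≤ k) :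
    IsDyckPrime c (List.replicate k (c, true) ++ List.replicate k (c, false)) := by
  obtain ⟨n, rfl⟩ : ∃ n, k = n + 1 := ⟨k - 1, by omega⟩
  refine ⟨List.replicate n (c, true) ++ List.replicate n (c, false), dyck_rep c n, ?_⟩
  rw [List.replicate_succ, List.replicate_succ' (n := n)]
  simp

private lemma infix_rep_rep {β : Type*} {x y : β} {w : List β} {p q : ℕ}
    (h : w <:+: List.replicate p x ++ List.replicate q y) :
    ∃ s t, s ≤ p ∧ t ≤ q ∧ w = List.replicate s x ++ List.replicate t y := by
  obtain ⟨xs, ys, e⟩ := h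
  have hw : w = ((List.replicate p x ++ List.replicate q y).drop xs.length).take w.length := by
    rw [← e, List.append_assoc, List.drop_left, List.take_left]
  rw [List.drop_append, List.drop_replicate, List.drop_replicate,
      List.take_append, List.take_replicate, List.take_replicate,
      List.length_replicate] at hw
  exact ⟨_, _, by omega, by omega, hw⟩

private lemma prime_getLast {a : α} {w : List (α × Bool)} (h : IsDyckPrime a w) :
    w.getLast? = some (a, false) := by
  obtain ⟨u, -, rfl⟩ := h
  rw [show ((a, true) :: u ++ [(a, false)]) = ((a, true) :: u) ++ [(a, false)] by simp,
    List.getLast?_concat]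

private lemma infix_strip {β : Type*} {w l : List β} {c d : β} (h : w <:+: c :: l ++ [d])
    (hne : w ≠ []) (hc : w.head? ≠ some c) (hd : w.getLast? ≠ some d) : w <:+: l := by
  obtain ⟨x, y, e⟩ := h
  cases x with
  | nil =>
    exfalso
    apply hc
    rcases w with _ | ⟨w₀, w'⟩
    · exact absurd rfl hne
    · simpa using congrArg List.head? e
  | cons x₀ x' =>
    have e1 : x' ++ (w ++ y) = l ++ [d] := by
      simpa using congrArg List.tail e
    rcases y.eq_nil_or_concat with rfl | ⟨y', z, rfl⟩
    · exfalso
      apply hd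
      have h2 : (x' ++ w).getLast? = some d := by
        simpa using congrArg List.getLast? e1
      rw [List.getLast?_append] at h2
      rcases hw : w.getLast? with _ | a
      · exact absurd (List.getLast?_eq_none_iff.mp hw) hne
      · rw [hw] at h2; simpa using h2
    · have hz : z = d := by
        have h2 := congrArg List.getLast? e1
        rw [show x' ++ (w ++ y'.concat z) = (x' ++ w ++ y') ++ [z] by simp,
          List.getLast?_concat, List.getLast?_concat] at h2
        simpa using h2
      refine ⟨x', y', ?_⟩
      apply List.append_cancel_right (bs := [d])
      rw [show (x' ++ w ++ y') ++ [d] = x' ++ (w ++ y'.concat d) by simp]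
      rw [hz] at e1
      exact e1

private lemma forall₂_flatten_nil {m : List α} {us : List (List (α × Bool))}
    (hf : List.Forall₂ IsDyckPrime m us) (hfl : us.flatten = []) : m = [] := by
  cases hf with
  | nil => rfl
  | cons h1 h2 =>
    exfalso
    rw [List.flatten_cons] at hfl
    exact prime_ne_nil h1 (List.append_eq_nil_iff.mp hfl).1

private lemma factor_rep {c : α} {m : List α} {us : List (List (α × Bool))} {k : ℕ}
    (hf : List.Forall₂ IsDyckPrime m us)
    (hfl : us.flatten = List.replicate k (c, true) ++ List.replicate k (c, false)) :
    (k = 0 ∧ m = []) ∨ (1 ≤ k ∧ m = [c]) := by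
  rcases Nat.eq_zero_or_pos k with rfl | hk
  · left
    refine ⟨rfl, forall₂_flatten_nil hf (by simpa using hfl)⟩
  · right
    refine ⟨hk, ?_⟩
    cases hf with
    | nil =>
      exfalso
      have := congrArg List.length hfl
      simp at this
      omega
    | cons h1 h2 =>
      rename_i x u₁ m' us'
      rw [List.flatten_cons] at hfl
      have hpre : u₁ <:+: List.replicate k (c, true) ++ List.replicate k (c, false) :=
        List.IsPrefix.isInfix ⟨us'.flatten, hfl⟩
      obtain ⟨s, t, hs, ht, hu1⟩ := infix_rep_rep hpre
      have hbal : Tc u₁ = Fc u₁ := dyck_balance (prime_dyck h1)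
      rw [hu1, Tc_append, Fc_append, Tc_rep_t, Tc_rep_f, Fc_rep_t, Fc_rep_f] at hbal
      have hst : s = t := by omega
      rw [← hst] at hu1 ht
      have hs1 : 1 ≤ s := by
        rcases Nat.eq_zero_or_pos s with rfl | h
        · exfalso; exact prime_ne_nil h1 (by simpa using hu1)
        · exact h
      have hsk : s = k := by
        by_contra hne
        have hlt : s < k := by omega
        rw [hu1] at hfl
        have hrw : List.replicate k (c, true) =
            List.replicate s (c, true) ++ List.replicate (k - s) (c, true) := by
          rw [← List.replicate_add]
          congr 1
          omega
        rw [hrw, List.append_assoc, List.append_assoc] at hfl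
        have hfl2 := List.append_cancel_left hfl
        have := congrArg List.head? hfl2
        rw [List.head?_append, List.head?_append, List.head?_replicate,
          List.head?_replicate] at this
        simp only [if_neg (by omega : ¬ s = 0), if_neg (by omega : ¬ k - s = 0)] at this
        simp at this
      subst hsk
      have hflnil : us'.flatten = [] := by
        have hl := congrArg List.length hfl
        rw [hu1] at hl
        simp only [List.length_append, List.length_replicate] at hl
        exact List.eq_nil_of_length_eq_zero (by omega)
      have hm' : m' = [] := forall₂_flatten_nil h2 hflnil
      have hx : x = c := by
        have hh := prime_head h1
        rw [hu1, List.head?_append, List.head?_replicate,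
          if_neg (by omega : ¬ s = 0)] at hh
        simpa using hh.symm
      rw [hm', hx]

end Aux4

section Aux5
open List

private def bt : Fin 2 × Bool := ((1 : Fin 2), true)
private def bf : Fin 2 × Bool := ((1 : Fin 2), false)

private lemma Fa_one_char {w : List (Fin 2 × Bool)} (h : w ∈ Fa Lb2 1) :
    ∃ k, 1 ≤ k ∧ w = List.replicate k bt ++ List.replicate k bf := by
  obtain ⟨hp, v, hv, hinf⟩ := h
  obtain ⟨n, hn, rfl⟩ := hv
  have h1 : w <:+: List.replicate (2 * n) bt ++ List.replicate (2 * n) bf := by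
    refine infix_strip hinf (prime_ne_nil hp) ?_ ?_
    · rw [prime_head hp]; decide
    · rw [prime_getLast hp]; decide
  obtain ⟨s, t, hs, ht, rfl⟩ := infix_rep_rep h1
  have hbal : Tc _ = Fc _ := dyck_balance (prime_dyck hp)
  rw [Tc_append, Fc_append] at hbal
  unfold bt bf at hbal
  rw [Tc_rep_t, Tc_rep_f, Fc_rep_t, Fc_rep_f] at hbal
  have hst : s = t := by omega
  subst hst
  have hs1 : 1 ≤ s := by
    rcases Nat.eq_zero_or_pos s with rfl | h
    · exact absurd (by simp) (prime_ne_nil hp)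
    · exact h
  exact ⟨s, hs1, rfl⟩

private lemma Fa_zero_char {w : List (Fin 2 × Bool)} (h : w ∈ Fa Lb2 0) :
    ∃ n, 1 ≤ n ∧ w = ((0 : Fin 2), true) ::
      (List.replicate (2 * n) bt ++ List.replicate (2 * n) bf) ++ [((0 : Fin 2), false)] := by
  obtain ⟨hp, v, hv, hinf⟩ := h
  obtain ⟨n, hn, rfl⟩ := hv
  refine ⟨n, hn, ?_⟩
  obtain ⟨x, y, e⟩ := hinf
  obtain ⟨u, hu, hw⟩ := hp
  have hwt : 1 ≤ w.count ((0 : Fin 2), true) := by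
    rw [hw]; simp
  have hwf : 1 ≤ w.count ((0 : Fin 2), false) := by
    rw [hw]; simp [List.count_append]
  have hx : x = [] := by
    cases hxe : x with
    | nil => rfl
    | cons x₀ x' =>
      exfalso
      rw [hxe] at e
      have hx0 : x₀ = ((0 : Fin 2), true) := by
        have := congrArg List.head? e
        simpa using this
      have hcnt := congrArg (List.count ((0 : Fin 2), true)) e
      rw [hx0] at hcnt
      simp [List.count_append, List.count_cons, List.count_replicate] at hcnt
      omega
  subst hx
  have hy : y = [] := by
    rcases y.eq_nil_or_concat with rfl | ⟨y', z, rfl⟩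
    · rfl
    · exfalso
      have hz : z = ((0 : Fin 2), false) := by
        have h2 := congrArg List.getLast? e
        rw [show ([] : List (Fin 2 × Bool)) ++ w ++ y'.concat z = ([] ++ w ++ y') ++ [z]
          by simp, List.getLast?_concat] at h2
        rw [show (((0 : Fin 2), true) :: (List.replicate (2 * n) ((1 : Fin 2), true) ++
          List.replicate (2 * n) ((1 : Fin 2), false)) ++ [((0 : Fin 2), false)]) =
          (((0 : Fin 2), true) :: (List.replicate (2 * n) ((1 : Fin 2), true) ++
          List.replicate (2 * n) ((1 : Fin 2), false))) ++ [((0 : Fin 2), false)]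
          by simp, List.getLast?_concat] at h2
        simpa using h2
      have hcnt := congrArg (List.count ((0 : Fin 2), false)) e
      rw [show ([] : List (Fin 2 × Bool)) ++ w ++ y'.concat z = w ++ (y' ++ [z]) by simp,
        hz] at hcnt
      simp [List.count_append, List.count_cons, List.count_replicate] at hcnt
      omega
  subst hy
  simpa [bt, bf] using e

private lemma surface_Lb2_zero : Surface Lb2 0 = {[(1 : Fin 2)]} := by
  ext m
  constructor
  · rintro ⟨us, hfor, hFa⟩
    obtain ⟨n, hn, he⟩ := Fa_zero_char hFa
    have hfl : us.flatten = List.replicate (2 * n) bt ++ List.replicate (2 * n) bf := by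
      have ht := congrArg List.tail he
      simp only [List.cons_append, List.tail_cons] at ht
      exact List.append_cancel_right (by simpa using ht)
    rcases factor_rep hfor (by simpa [bt, bf] using hfl) with ⟨h0, -⟩ | ⟨-, hm⟩
    · omega
    · simpa using hm
  · rintro rfl
    refine ⟨[List.replicate 2 bt ++ List.replicate 2 bf], ?_, ?_, ?_⟩
    · exact List.Forall₂.cons (by unfold bt bf; exact prime_rep 1 (by norm_num)) List.Forall₂.nil
    · refine ⟨List.replicate 2 bt ++ List.replicate 2 bf, ?_, by simp⟩
      unfold bt bf; exact dyck_rep 1 2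
    · refine ⟨((0 : Fin 2), true) :: (List.replicate (2 * 1) ((1 : Fin 2), true) ++
        List.replicate (2 * 1) ((1 : Fin 2), false)) ++ [((0 : Fin 2), false)],
        ⟨1, le_rfl, rfl⟩, ?_⟩
      refine ⟨[], [], ?_⟩
      simp [bt, bf]

private lemma surface_Lb2_one : Surface Lb2 1 = {[(1 : Fin 2)], []} := by
  ext m
  constructor
  · rintro ⟨us, hfor, hFa⟩
    obtain ⟨k, hk, he⟩ := Fa_one_char hFa
    obtain ⟨j, rfl⟩ : ∃ j, k = j + 1 := ⟨k - 1, by omega⟩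
    have hfl : us.flatten = List.replicate j bt ++ List.replicate j bf := by
      rw [List.replicate_succ, List.replicate_succ' (n := j)] at he
      have ht := congrArg List.tail he
      simp only [List.cons_append, List.tail_cons] at ht
      refine List.append_cancel_right (bs := [bf]) ?_
      rw [show (List.replicate j bt ++ List.replicate j bf) ++ [bf] =
        List.replicate j bt ++ (List.replicate j bf ++ [bf]) by simp]
      simpa [bt, bf] using ht
    rcases factor_rep hfor (by simpa [bt, bf] using hfl) with ⟨-, hm⟩ | ⟨-, hm⟩
    · simp [hm]
    · simp [hm]
  · intro hm
    have hW : (((0 : Fin 2), true) :: (List.replicate (2 * 1) ((1 : Fin 2), true) ++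
        List.replicate (2 * 1) ((1 : Fin 2), false)) ++ [((0 : Fin 2), false)]) ∈ Lb2 :=
      ⟨1, le_rfl, rfl⟩
    rcases hm with rfl | rfl
    · refine ⟨[[bt, bf]], ?_, ?_, ?_⟩
      · refine List.Forall₂.cons ⟨[], IsDyck.nil, by simp [bt, bf]⟩ List.Forall₂.nil
      · exact ⟨[bt, bf], IsDyck.cons 1 IsDyck.nil IsDyck.nil, by simp [bt, bf]⟩
      · exact ⟨_, hW, by decide⟩
    · refine ⟨[], ?_, ?_, ?_⟩
      · exact List.Forall₂.nil
      · exact ⟨[], IsDyck.nil, by simp⟩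
      · exact ⟨_, hW, by decide⟩

end Aux5

section Aux6
open List

private lemma gen_inv {R : α → Set (List α)} {a : α} {w : List (α × Bool)} (h : Gen R a w) :
    ∃ m us, m ∈ R a ∧ List.Forall₂ (Gen R) m us ∧
      w = (a, true) :: us.flatten ++ [(a, false)] := by
  cases h with
  | mk a m us hm hf => exact ⟨m, us, hm, hf, rfl⟩

private lemma factorization_unique {m : List α} {us : List (List (α × Bool))}
    (h : List.Forall₂ IsDyckPrime m us) :
    ∀ {m' : List α} {us' : List (List (α × Bool))}, List.Forall₂ IsDyckPrime m' us' →
      us.flatten = us'.flatten → m = m' := by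
  induction h with
  | nil =>
    intro m' us' h' hfl
    exact (forall₂_flatten_nil h' (by simpa using hfl.symm)).symm
  | cons h1 h2 ih =>
    intro m' us' h' hfl
    cases h' with
    | nil =>
      exfalso
      rw [List.flatten_cons, List.flatten_nil] at hfl
      exact prime_ne_nil h1 (List.append_eq_nil_iff.mp hfl).1
    | cons h1' h2' =>
      rename_i x u m₂ us₂ x' u' m₂' us₂'
      rw [List.flatten_cons, List.flatten_cons] at hfl
      have hprefix : u <+: u' ∨ u' <+: u := by
        rcases List.append_eq_append_iff.mp hfl with ⟨a', ha1, ha2⟩ | ⟨c', hc1, hc2⟩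
        · exact Or.inl ⟨a', ha1.symm⟩
        · exact Or.inr ⟨c', hc1.symm⟩
      have huu : u = u' := by
        rcases hprefix with hpre | hpre
        · exact prefix_balanced_eq h1' hpre (prime_ne_nil h1) (dyck_balance (prime_dyck h1))
        · exact (prefix_balanced_eq h1 hpre (prime_ne_nil h1')
            (dyck_balance (prime_dyck h1'))).symm
      subst huu
      have hxx : x = x' := by
        have := prime_head h1'
        rw [prime_head h1] at this
        simpa using this
      rw [hxx, ih h2' (List.append_cancel_left hfl)]

private lemma gen_std_one {n : ℕ} (hn : 1 ≤ n) :
    Gen Sstd 1 (List.replicate n bt ++ List.replicate n bf) := by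
  induction n with
  | zero => omega
  | succ n ih =>
    rcases Nat.eq_zero_or_pos n with rfl | hpos
    · have := Gen.mk (R := Sstd) 1 [] [] (by simp [Sstd]) List.Forall₂.nil
      simpa [bt, bf] using this
    · have := Gen.mk (R := Sstd) 1 [1] [List.replicate n bt ++ List.replicate n bf]
        (by simp [Sstd]) (List.Forall₂.cons (ih hpos) List.Forall₂.nil)
      rw [List.replicate_succ, List.replicate_succ' (n := n)]
      simpa [bt, bf] using this

private lemma gen_std_one_char {w : List (Fin 2 × Bool)} (h : Gen Sstd 1 w) :
    ∃ n, 1 ≤ n ∧ w = List.replicate n bt ++ List.replicate n bf := by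
  have main : ∀ a w, Gen Sstd a w → (a = 1 →
      ∃ n, 1 ≤ n ∧ w = List.replicate n bt ++ List.replicate n bf) := by
    refine gen_ind ?_
    rintro a m us hm hf hp rfl
    have hm' : m = [1] ∨ m = [] := by
      simpa [Sstd] using hm
    rcases hm' with rfl | rfl
    · cases hp with
      | cons h1 h2 =>
        cases h2
        obtain ⟨n, hn, rfl⟩ := h1 rfl
        refine ⟨n + 1, by omega, ?_⟩
        rw [List.replicate_succ, List.replicate_succ' (n := n)]
        simp [bt, bf]
    · cases hp
      exact ⟨1, le_rfl, by simp [bt, bf]⟩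
  exact main 1 w h rfl

private lemma gen_std_eq : {w | Gen Sstd 0 w} = Lstd := by
  ext w
  constructor
  · intro h
    obtain ⟨m, us, hm, hf, rfl⟩ := gen_inv h
    have hm' : m = [1] := by simpa [Sstd] using hm
    subst hm'
    cases hf with
    | cons h1 h2 =>
      cases h2
      obtain ⟨n, hn, rfl⟩ := gen_std_one_char h1
      exact ⟨n, hn, by simp [bt, bf]⟩
  · rintro ⟨n, hn, rfl⟩
    have := Gen.mk (R := Sstd) 0 [1]
      [List.replicate n bt ++ List.replicate n bf]
      (by simp [Sstd]) (List.Forall₂.cons (gen_std_one hn) List.Forall₂.nil)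
    simpa [bt, bf] using this

private lemma unique_xml (M : Set (List (Fin 2 × Bool))) (hM : IsXMLLanguage M)
    (hsub : M ⊆ {w | IsDyckPrime (0 : Fin 2) w})
    (hsurf : ∀ a, Surface M a = Surface Lb2 a) : M = Lstd := by
  obtain ⟨a₀, R, hreg, hML⟩ := hM
  have hsurf0 : Surface M 0 = {[(1 : Fin 2)]} := by rw [hsurf 0, surface_Lb2_zero]
  have hsurf1 : Surface M 1 = {[(1 : Fin 2)], []} := by rw [hsurf 1, surface_Lb2_one]
  -- the axiom is 0
  have ha₀ : a₀ = 0 := by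
    have h1 : [(1 : Fin 2)] ∈ Surface M 0 := by rw [hsurf0]; rfl
    obtain ⟨us, hfor, hp0, v, hv, hinf⟩ := h1
    have hgv : Gen R a₀ v := by rwa [hML] at hv
    have hpv : IsDyckPrime (0 : Fin 2) v := hsub hv
    obtain ⟨m, us', hm, hf, rfl⟩ := gen_inv hgv
    have := prime_head hpv
    simp at this
    exact this
  subst ha₀
  have hsurf_sub : ∀ c, Surface M c = Sstd c := by
    intro c
    fin_cases c
    · show Surface M 0 = Sstd 0
      rw [hsurf0]; simp [Sstd]
    · show Surface M 1 = Sstd 1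
      rw [hsurf1]; simp [Sstd]
  apply Set.eq_of_subset_of_subset
  · -- M ⊆ Lstd
    intro w hw
    have hgw : Gen R 0 w := by rwa [hML] at hw
    have hres := gen_restrict hgw (List.infix_refl w)
    have hmono : Gen Sstd 0 w := by
      refine gen_mono ?_ hres
      intro c m hm
      obtain ⟨us, hfor, hinf⟩ := hm
      have : m ∈ Surface M c :=
        ⟨us, hfor, ⟨us.flatten, flatten_dyck hfor, rfl⟩, w, hw, hinf⟩
      rwa [hsurf_sub c] at this
    rw [← gen_std_eq]
    exact hmono
  · -- Lstd ⊆ M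
    have hprod : ∀ (c : Fin 2) m, m ∈ Surface M c → m ∈ R c := by
      intro c m hmem
      obtain ⟨us, hfor, hp0, v, hv, hinf⟩ := hmem
      have hgv : Gen R 0 v := by rwa [hML] at hv
      have hgw : Gen R c ((c, true) :: us.flatten ++ [(c, false)]) :=
        gen_subtree hgv hinf hp0
      obtain ⟨m', us', hm', hf', he⟩ := gen_inv hgw
      have hfl : us.flatten = us'.flatten := by
        have ht := congrArg List.tail he
        simp only [List.cons_append, List.tail_cons] at ht
        exact List.append_cancel_right ht
      have hfor' : List.Forall₂ IsDyckPrime m' us' :=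
        forall₂_mem_imp hf' (fun _ _ _ hg => gen_prime hg)
      rwa [factorization_unique hfor hfor' hfl]
    have hS : ∀ c, Sstd c ⊆ R c := by
      have h0 : [(1 : Fin 2)] ∈ Surface M 0 := by rw [hsurf0]; rfl
      have h1 : [(1 : Fin 2)] ∈ Surface M 1 := by rw [hsurf1]; left; rfl
      have h2 : ([] : List (Fin 2)) ∈ Surface M 1 := by rw [hsurf1]; right; rfl
      intro c
      fin_cases c
      · show Sstd 0 ⊆ R 0
        intro m hm
        have : m = [(1 : Fin 2)] := by simpa [Sstd] using hm
        subst this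
        exact hprod 0 _ h0
      · show Sstd 1 ⊆ R 1
        intro m hm
        have : m = [(1 : Fin 2)] ∨ m = [] := by simpa [Sstd] using hm
        rcases this with rfl | rfl
        · exact hprod 1 _ h1
        · exact hprod 1 _ h2
    intro w hw
    rw [← gen_std_eq] at hw
    rw [hML]
    exact gen_mono hS hw

end Aux6

/-- `{a b^{2n} b̄^{2n} ā | n ≥ 1}` is not an XML-language. Its surfaces are
`S_a = {b}` and `S_b = {b, ε}`; the unique XML-language with these surfaces is
the standard language `{a bⁿ b̄ⁿ ā | n ≥ 1}`; and the context condition fails: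
`(ab, b̄ā)` is a context of `b b̄` in `L` but not of `b² b̄²`, although both lie
in `F_b(L)`. -/
theorem b2n_not_xml :
    ¬ IsXMLLanguage Lb2 ∧
    Surface Lb2 0 = {[(1 : Fin 2)]} ∧
    Surface Lb2 1 = {[(1 : Fin 2)], []} ∧
    {w | Gen Sstd 0 w} = Lstd ∧
    (∀ M : Set (List (Fin 2 × Bool)), IsXMLLanguage M →
        M ⊆ {w | IsDyckPrime (0 : Fin 2) w} →
        (∀ a, Surface M a = Surface Lb2 a) → M = Lstd) ∧
    ([((0 : Fin 2), true), ((1 : Fin 2), true)], [((1 : Fin 2), false), ((0 : Fin 2), false)])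
      ∈ Ctx Lb2 [((1 : Fin 2), true), ((1 : Fin 2), false)] ∧
    ([((0 : Fin 2), true), ((1 : Fin 2), true)], [((1 : Fin 2), false), ((0 : Fin 2), false)])
      ∉ Ctx Lb2 [((1 : Fin 2), true), ((1 : Fin 2), true),
                 ((1 : Fin 2), false), ((1 : Fin 2), false)] ∧
    [((1 : Fin 2), true), ((1 : Fin 2), false)] ∈ Fa Lb2 1 ∧
    [((1 : Fin 2), true), ((1 : Fin 2), true), ((1 : Fin 2), false), ((1 : Fin 2), false)]
      ∈ Fa Lb2 1 := by
  have hLb2sub : Lb2 ⊆ {w | IsDyckPrime (0 : Fin 2) w} := by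
    rintro w ⟨n, hn, rfl⟩
    exact ⟨_, dyck_rep (1 : Fin 2) (2 * n), rfl⟩
  have hnotxml : ¬ IsXMLLanguage Lb2 := by
    intro hx
    have heq : Lb2 = Lstd := unique_xml Lb2 hx hLb2sub (fun a => rfl)
    have hmem : (((0 : Fin 2), true) :: (List.replicate 1 ((1 : Fin 2), true) ++
        List.replicate 1 ((1 : Fin 2), false)) ++ [((0 : Fin 2), false)]) ∈ Lstd :=
      ⟨1, le_rfl, rfl⟩
    rw [← heq] at hmem
    obtain ⟨n, hn, he⟩ := hmem
    have := congrArg List.length he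
    simp at this
    omega
  refine ⟨hnotxml, surface_Lb2_zero, surface_Lb2_one, gen_std_eq, unique_xml, ?_, ?_, ?_, ?_⟩
  · exact ⟨1, le_rfl, by decide⟩
  · rintro ⟨n, hn, he⟩
    have := congrArg List.length he
    simp at this
    omega
  · exact ⟨⟨[], IsDyck.nil, rfl⟩, _, ⟨1, le_rfl, rfl⟩, by decide⟩
  · exact ⟨⟨[((1 : Fin 2), true), ((1 : Fin 2), false)],
      IsDyck.cons 1 IsDyck.nil IsDyck.nil, rfl⟩, _, ⟨1, le_rfl, rfl⟩, by decide⟩
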